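/- Let h be a Hessenberg function on {1,…,n}. Then m(Γ_h), the maximum cardinality of an independent set of vertices of Γ_h (equivalently, the maximum sink-set size), equals the maximum, over all Young diagrams σ with n boxes that admit a P_h-tableau, of the number of boxes in the first row of σ. (At least one P_h-tableau always exists, namely the single-column filling 1,2,…,n from top to bottom.) -/
import Mathlib


/-- `h` is a Hessenberg function on `{1,…,n}`. -/
def IsHessenberg (n : ℕ) (h : ℕ → ℕ) : Prop :=
  (∀ i, 1 ≤ i → i ≤ n → i ≤ h i ∧ h i ≤ n) ∧
  (∀ i, 1 ≤ i → i < n → h i ≤ h (i + 1))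

/-- `{j,i}` (with `j < i`) is an edge of the incomparability graph `Γ_h`. -/
def IsEdge (n : ℕ) (h : ℕ → ℕ) (j i : ℕ) : Prop :=
  1 ≤ j ∧ j < i ∧ i ≤ n ∧ i ≤ h j

/-- `lam` is a Young diagram (partition) with `n` boxes: `lam r` is the length of row `r`
(rows indexed from `0`), weakly decreasing, with `n` boxes in total. -/
def IsPartitionOf (n : ℕ) (lam : ℕ → ℕ) : Prop :=
  Antitone lam ∧ (∑ r ∈ Finset.range n, lam r) = n ∧ lam n = 0

/-- `t` is a `P_h`-tableau of shape `lam`: `t r c` is the entry of the box in row `r`,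
column `c` (both indexed from `0`); entries are a bijective filling by `{1,…,n}`;
an entry immediately to the right of `j` exceeds `h(j)`; if `i` is immediately
below `j` then `j ≤ h(i)`. -/
def IsPhTableau (n : ℕ) (h : ℕ → ℕ) (lam : ℕ → ℕ) (t : ℕ → ℕ → ℕ) : Prop :=
  Set.BijOn (fun p : ℕ × ℕ => t p.1 p.2) {p : ℕ × ℕ | p.2 < lam p.1} (Set.Icc 1 n) ∧
  (∀ r c, c + 1 < lam r → h (t r c) < t r (c + 1)) ∧
  (∀ r c, c < lam (r + 1) → t r c ≤ h (t (r + 1) c))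

namespace Stmt8Aux

/-- The greedy sequence: `1, h(1)+1, h(h(1)+1)+1, …`. -/
def gseq (h : ℕ → ℕ) : ℕ → ℕ
  | 0 => 1
  | k + 1 => h (gseq h k) + 1

theorem gpos (h : ℕ → ℕ) (k : ℕ) : 1 ≤ gseq h k := by
  cases k <;> simp [gseq]

theorem hmono {n : ℕ} {h : ℕ → ℕ} (hh : IsHessenberg n h) {i j : ℕ}
    (hi : 1 ≤ i) (hij : i ≤ j) (hj : j ≤ n) : h i ≤ h j := by
  induction j, hij using Nat.le_induction with
  | base => exact le_refl _
  | succ j hij ih =>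
      exact le_trans (ih (by omega)) (hh.2 j (by omega) (by omega))

theorem gstep {n : ℕ} {h : ℕ → ℕ} (hh : IsHessenberg n h) {k : ℕ}
    (hk : gseq h k ≤ n) : gseq h k < gseq h (k + 1) := by
  have := (hh.1 (gseq h k) (gpos h k) hk).1
  simp only [gseq]; omega

theorem gseq_ge {n : ℕ} {h : ℕ → ℕ} (hh : IsHessenberg n h) :
    ∀ k, (∀ j, j ≤ k → gseq h j ≤ n) → k + 1 ≤ gseq h k := by
  intro k
  induction k with
  | zero => intro _; simp [gseq]
  | succ k ih =>
      intro hall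
      have h1 : k + 1 ≤ gseq h k := ih (fun j hj => hall j (by omega))
      have h2 : gseq h k < gseq h (k + 1) := gstep hh (hall k (by omega))
      omega

theorem gexists {n : ℕ} {h : ℕ → ℕ} (hh : IsHessenberg n h) :
    ∃ k, n < gseq h k := by
  by_contra hc
  push_neg at hc
  have := gseq_ge hh n (fun j _ => hc j)
  have := hc n
  omega

end Stmt8Aux

open Stmt8Aux in
theorem stmt8 (n : ℕ) (h : ℕ → ℕ) (hn : 1 ≤ n) (hh : IsHessenberg n h) :
    IsGreatest
      {k | ∃ lam t, IsPartitionOf n lam ∧ IsPhTableau n h lam t ∧ lam 0 = k}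
      (sSup {c | ∃ S : Finset ℕ, S ⊆ Finset.Icc 1 n ∧
        (∀ u ∈ S, ∀ v ∈ S, ¬ IsEdge n h u v) ∧ S.card = c}) := by
  classical
  set C : Set ℕ := {c | ∃ S : Finset ℕ, S ⊆ Finset.Icc 1 n ∧
      (∀ u ∈ S, ∀ v ∈ S, ¬ IsEdge n h u v) ∧ S.card = c} with hCdef
  have hex : ∃ k, n < gseq h k := gexists hh
  set m : ℕ := Nat.find hex with hmdef
  have hm_spec : n < gseq h m := Nat.find_spec hex
  have hm_lt : ∀ k, k < m → gseq h k ≤ n := fun k hk => le_of_not_gt (Nat.find_min hex hk)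
  have hm1 : 1 ≤ m := by
    rcases Nat.eq_zero_or_pos m with h0 | h1
    · rw [h0] at hm_spec; simp [gseq] at hm_spec; omega
    · exact h1
  -- monotonicity of gseq on indices ≤ m
  have gmono : ∀ j k, j ≤ k → k ≤ m → gseq h j ≤ gseq h k := by
    intro j k hjk hkm
    induction k, hjk using Nat.le_induction with
    | base => exact le_refl _
    | succ k hjk ih =>
        have hkn : gseq h k ≤ n := hm_lt k (by omega)
        exact le_trans (ih (by omega)) (le_of_lt (gstep hh hkn))
  have gstrict : ∀ j k, j < k → k ≤ m → gseq h j < gseq h k := by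
    intro j k hjk hkm
    exact lt_of_lt_of_le (gstep hh (hm_lt j (by omega))) (gmono (j + 1) k (by omega) hkm)
  have hmn : m ≤ n := by
    have h1 := gseq_ge hh (m - 1) (fun j hj => hm_lt j (by omega))
    have h2 := hm_lt (m - 1) (by omega)
    omega
  -- the greedy independent set
  set G : Finset ℕ := (Finset.range m).image (gseq h) with hGdef
  have hGsub : G ⊆ Finset.Icc 1 n := by
    intro x hx
    obtain ⟨k, hk, rfl⟩ := Finset.mem_image.mp hx
    rw [Finset.mem_range] at hk
    exact Finset.mem_Icc.mpr ⟨gpos h k, hm_lt k hk⟩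
  have hGcard : G.card = m := by
    rw [hGdef, Finset.card_image_of_injOn, Finset.card_range]
    intro i hi j hj hij
    rw [Finset.coe_range, Set.mem_Iio] at hi hj
    by_contra hne
    rcases lt_or_gt_of_ne hne with hlt | hlt
    · exact absurd hij (ne_of_lt (gstrict i j hlt (by omega)))
    · exact absurd hij.symm (ne_of_lt (gstrict j i hlt (by omega)))
  have hGindep : ∀ u ∈ G, ∀ v ∈ G, ¬ IsEdge n h u v := by
    intro u hu v hv hedge
    obtain ⟨j, hj, rfl⟩ := Finset.mem_image.mp hu
    obtain ⟨i, hi, rfl⟩ := Finset.mem_image.mp hv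
    rw [Finset.mem_range] at hj hi
    obtain ⟨_, huv, _, hle⟩ := hedge
    have hji : j < i := by
      by_contra hc
      exact absurd huv (not_lt.mpr (gmono i j (by omega) (by omega)))
    have : gseq h (j + 1) ≤ gseq h i := gmono (j + 1) i (by omega) (by omega)
    simp only [gseq] at this
    omega
  -- every independent set has cardinality at most m
  have hub : ∀ c ∈ C, c ≤ m := by
    rintro c ⟨S, hsub, hind, rfl⟩
    by_contra hc
    push_neg at hc
    set e := S.orderIsoOfFin rfl with hedef
    have hclaim : ∀ i, ∀ hi : i < S.card, gseq h i ≤ (e ⟨i, hi⟩ : ℕ) := by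
      intro i
      induction i with
      | zero =>
          intro hi
          have hmem : ((e ⟨0, hi⟩ : ℕ)) ∈ S := (e ⟨0, hi⟩).2
          have := Finset.mem_Icc.mp (hsub hmem)
          simpa [gseq] using this.1
      | succ i ih =>
          intro hi
          have hi' : i < S.card := by omega
          set u : ℕ := (e ⟨i, hi'⟩ : ℕ) with hudef
          set v : ℕ := (e ⟨i + 1, hi⟩ : ℕ) with hvdef
          have hu : u ∈ S := (e ⟨i, hi'⟩).2
          have hv : v ∈ S := (e ⟨i + 1, hi⟩).2
          have huIcc := Finset.mem_Icc.mp (hsub hu)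
          have hvIcc := Finset.mem_Icc.mp (hsub hv)
          have huv : u < v := by
            have : e ⟨i, hi'⟩ < e ⟨i + 1, hi⟩ := by
              rw [OrderIso.lt_iff_lt]
              exact Fin.mk_lt_mk.mpr (by omega)
            exact_mod_cast this
          have hnedge := hind u hu v hv
          have hhuv : h u < v := by
            by_contra hcon
            exact hnedge ⟨huIcc.1, huv, hvIcc.2, by omega⟩
          have hIH : gseq h i ≤ u := ih hi'
          have : h (gseq h i) ≤ h u := hmono hh (gpos h i) hIH huIcc.2
          simp only [gseq]
          omega
    have hmlt : m < S.card := hc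
    have h1 := hclaim m hmlt
    have hmem : ((e ⟨m, hmlt⟩ : ℕ)) ∈ S := (e ⟨m, hmlt⟩).2
    have h2 := Finset.mem_Icc.mp (hsub hmem)
    omega
  have hgrC : IsGreatest C m := ⟨⟨G, hGsub, hGindep, hGcard⟩, hub⟩
  rw [hgrC.csSup_eq]
  constructor
  · -- membership: construct a tableau whose first row has length m
    set R : Finset ℕ := Finset.Icc 1 n \ G with hRdef
    set l : List ℕ := R.sort (· ≤ ·) with hldef
    have hlen : l.length = n - m := by
      rw [hldef, Finset.length_sort, hRdef, Finset.card_sdiff_of_subset hGsub, hGcard, Nat.card_Icc]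
      omega
    have hlmemR : ∀ i (hi : i < l.length), l.getD i 0 ∈ R := by
      intro i hi
      rw [List.getD_eq_getElem l 0 hi]
      exact (Finset.mem_sort (· ≤ ·)).mp (List.getElem_mem hi)
    have hlIcc : ∀ i (hi : i < l.length), 1 ≤ l.getD i 0 ∧ l.getD i 0 ≤ n := by
      intro i hi
      have := Finset.mem_sdiff.mp (hlmemR i hi)
      exact Finset.mem_Icc.mp this.1
    have hlnotG : ∀ i (hi : i < l.length), l.getD i 0 ∉ G := by
      intro i hi
      exact (Finset.mem_sdiff.mp (hlmemR i hi)).2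
    refine ⟨fun r => if r = 0 then m else if r ≤ n - m then 1 else 0,
      fun r c => if r = 0 then gseq h c else l.getD (r - 1) 0, ⟨?_, ?_, ?_⟩, ⟨?_, ?_, ?_⟩, by simp⟩
    · -- antitone
      intro r s hrs
      simp only
      split_ifs <;> omega
    · -- sum
      have hsplit : ∀ r : ℕ, (if r = 0 then m else if r ≤ n - m then 1 else 0) =
          (if r = 0 then m else 0) + (if r ∈ Finset.Icc 1 (n - m) then 1 else 0) := by
        intro r
        simp only [Finset.mem_Icc]
        split_ifs <;> omega
      rw [Finset.sum_congr rfl (fun r _ => hsplit r), Finset.sum_add_distrib]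
      have h1 : (∑ r ∈ Finset.range n, if r = 0 then m else 0) = m := by
        rw [Finset.sum_ite_eq' (Finset.range n) 0 (fun _ => m),
          if_pos (Finset.mem_range.mpr (by omega))]
      have h2 : (∑ r ∈ Finset.range n, if r ∈ Finset.Icc 1 (n - m) then 1 else 0) = n - m := by
        rw [Finset.sum_ite_mem]
        have : Finset.range n ∩ Finset.Icc 1 (n - m) = Finset.Icc 1 (n - m) := by
          apply Finset.inter_eq_right.mpr
          intro x hx
          rw [Finset.mem_Icc] at hx
          rw [Finset.mem_range]
          omega
        rw [this, Finset.sum_const, Nat.card_Icc, smul_eq_mul, mul_one]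
        omega
      rw [h1, h2]
      omega
    · -- lam n = 0
      simp only
      split_ifs <;> omega
    · -- BijOn
      constructor
      · -- MapsTo
        rintro ⟨r, c⟩ hp
        simp only [Set.mem_setOf_eq] at hp
        by_cases hr : r = 0
        · subst hr
          simp only [reduceIte] at hp ⊢
          exact Set.mem_Icc.mpr ⟨gpos h c, hm_lt c hp⟩
        · simp only [if_neg hr] at hp ⊢
          have hrle : r ≤ n - m := by by_contra hcon; rw [if_neg hcon] at hp; omega
          rw [if_pos hrle] at hp
          have hidx : r - 1 < l.length := by rw [hlen]; omega
          exact Set.mem_Icc.mpr (hlIcc (r - 1) hidx)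
      constructor
      · -- InjOn
        rintro ⟨r, c⟩ hp ⟨r', c'⟩ hp' heq
        simp only [Set.mem_setOf_eq] at hp hp'
        simp only at heq
        by_cases hr : r = 0 <;> by_cases hr' : r' = 0
        · subst hr; subst hr'
          simp only [reduceIte] at hp hp' heq
          have hcc : c = c' := by
            by_contra hne
            rcases lt_or_gt_of_ne hne with hlt | hlt
            · exact absurd heq (ne_of_lt (gstrict c c' hlt (by omega)))
            · exact absurd heq.symm (ne_of_lt (gstrict c' c hlt (by omega)))
          rw [hcc]
        · subst hr
          simp only [reduceIte, if_neg hr'] at hp hp' heq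
          have hrle : r' ≤ n - m := by by_contra hcon; rw [if_neg hcon] at hp'; omega
          rw [if_pos hrle] at hp'
          have hidx : r' - 1 < l.length := by rw [hlen]; omega
          have hG1 : gseq h c ∈ G := Finset.mem_image.mpr ⟨c, Finset.mem_range.mpr hp, rfl⟩
          rw [heq] at hG1
          exact absurd hG1 (hlnotG (r' - 1) hidx)
        · subst hr'
          simp only [reduceIte, if_neg hr] at hp hp' heq
          have hrle : r ≤ n - m := by by_contra hcon; rw [if_neg hcon] at hp; omega
          rw [if_pos hrle] at hp
          have hidx : r - 1 < l.length := by rw [hlen]; omega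
          have hG1 : gseq h c' ∈ G := Finset.mem_image.mpr ⟨c', Finset.mem_range.mpr hp', rfl⟩
          rw [← heq] at hG1
          exact absurd hG1 (hlnotG (r - 1) hidx)
        · simp only [if_neg hr, if_neg hr'] at hp hp' heq
          have hrle : r ≤ n - m := by by_contra hcon; rw [if_neg hcon] at hp; omega
          have hrle' : r' ≤ n - m := by by_contra hcon; rw [if_neg hcon] at hp'; omega
          rw [if_pos hrle] at hp
          rw [if_pos hrle'] at hp'
          have hidx : r - 1 < l.length := by rw [hlen]; omega
          have hidx' : r' - 1 < l.length := by rw [hlen]; omega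
          rw [List.getD_eq_getElem l 0 hidx, List.getD_eq_getElem l 0 hidx'] at heq
          have hnd : l.Nodup := Finset.sort_nodup _ _
          have h9 := (hnd.getElem_inj_iff).mp heq
          have hrr : r = r' := by omega
          have hcz : c = 0 := by omega
          have hcz' : c' = 0 := by omega
          rw [hrr, hcz, hcz']
      · -- SurjOn
        intro x hx
        rw [Set.mem_Icc] at hx
        by_cases hxG : x ∈ G
        · obtain ⟨c, hc, rfl⟩ := Finset.mem_image.mp hxG
          rw [Finset.mem_range] at hc
          exact ⟨(0, c), by simpa using hc, by simp⟩
        · have hxR : x ∈ R := Finset.mem_sdiff.mpr ⟨Finset.mem_Icc.mpr ⟨hx.1, hx.2⟩, hxG⟩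
          have hxl : x ∈ l := (Finset.mem_sort (· ≤ ·)).mpr hxR
          obtain ⟨i, hi, hix⟩ := List.mem_iff_getElem.mp hxl
          refine ⟨(i + 1, 0), ?_, ?_⟩
          · simp only [Set.mem_setOf_eq]
            have : i + 1 ≤ n - m := by rw [hlen] at hi; omega
            simp [this]
          · simp only
            rw [if_neg (by omega : ¬ i + 1 = 0)]
            simp only [Nat.add_sub_cancel]
            rw [List.getD_eq_getElem l 0 hi]
            exact hix
    · -- row condition
      intro r c hc
      by_cases hr : r = 0
      · subst hr
        simp only [reduceIte] at hc ⊢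
        simp only [gseq]
        omega
      · simp only [if_neg hr] at hc
        split_ifs at hc <;> omega
    · -- column condition
      intro r c hc
      simp only [if_neg (by omega : ¬ r + 1 = 0)] at hc
      have hrle : r + 1 ≤ n - m := by by_contra hcon; rw [if_neg hcon] at hc; omega
      rw [if_pos hrle] at hc
      have hcz : c = 0 := by omega
      subst hcz
      have hidx : r < l.length := by rw [hlen]; omega
      simp only
      rw [if_neg (Nat.succ_ne_zero r), Nat.add_sub_cancel]
      have hy := hlIcc r hidx
      have hyh : l.getD r 0 ≤ h (l.getD r 0) := (hh.1 _ hy.1 hy.2).1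
      by_cases hr : r = 0
      · subst hr
        simp only [reduceIte, gseq]
        omega
      · rw [if_neg hr]
        have hidx' : r - 1 < l.length := by omega
        have hsorted : l.Pairwise (· ≤ ·) := Finset.pairwise_sort _ _
        have hle : l.get ⟨r - 1, hidx'⟩ ≤ l.get ⟨r, hidx⟩ :=
          hsorted.rel_get_of_lt (by simp [Fin.lt_def]; omega)
        rw [List.getD_eq_getElem l 0 hidx', List.getD_eq_getElem l 0 hidx]
        calc l[r-1] ≤ l[r] := hle
          _ ≤ h l[r] := by
              rw [List.getD_eq_getElem l 0 hidx] at hyh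
              exact hyh
  · -- upper bound: every tableau first-row length is ≤ m
    rintro k ⟨lam, t, hpart, ⟨hbij, hrow, hcol⟩, hk⟩
    have hmem : ∀ c, c < lam 0 → t 0 c ∈ Set.Icc 1 n := by
      intro c hc
      exact hbij.1 (show ((0, c) : ℕ × ℕ) ∈ {p : ℕ × ℕ | p.2 < lam p.1} from hc)
    have rowlt : ∀ c c', c < c' → c' < lam 0 → h (t 0 c) < t 0 c' := by
      intro c c' hcc'
      induction c', hcc' using Nat.le_induction with
      | base => exact fun hlt => hrow 0 c hlt
      | succ k' hk' ih =>
          intro h1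
          have hk0 : k' < lam 0 := by omega
          have h2 := ih hk0
          have h3 := Set.mem_Icc.mp (hmem k' hk0)
          have h4 : t 0 k' ≤ h (t 0 k') := (hh.1 _ h3.1 h3.2).1
          have h5 := hrow 0 k' h1
          omega
    set S' : Finset ℕ := (Finset.range (lam 0)).image (t 0) with hS'def
    have hS'sub : S' ⊆ Finset.Icc 1 n := by
      intro x hx
      obtain ⟨c, hc, rfl⟩ := Finset.mem_image.mp hx
      rw [Finset.mem_range] at hc
      have := Set.mem_Icc.mp (hmem c hc)
      exact Finset.mem_Icc.mpr this
    have hS'indep : ∀ u ∈ S', ∀ v ∈ S', ¬ IsEdge n h u v := by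
      intro u hu v hv hedge
      obtain ⟨c, hc, rfl⟩ := Finset.mem_image.mp hu
      obtain ⟨c', hc', rfl⟩ := Finset.mem_image.mp hv
      rw [Finset.mem_range] at hc hc'
      obtain ⟨h1, h2, h3, h4⟩ := hedge
      rcases lt_trichotomy c c' with hlt | heq | hgt
      · exact absurd h4 (not_le.mpr (rowlt c c' hlt hc'))
      · subst heq; omega
      · have h5 := rowlt c' c hgt hc
        have h6 := Set.mem_Icc.mp (hmem c' hc')
        have h7 : t 0 c' ≤ h (t 0 c') := (hh.1 _ h6.1 h6.2).1
        omega
    have hS'card : S'.card = lam 0 := by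
      rw [hS'def, Finset.card_image_of_injOn, Finset.card_range]
      intro c hc c' hc' heq
      rw [Finset.coe_range, Set.mem_Iio] at hc hc'
      have h1 : ((0, c) : ℕ × ℕ) ∈ {p : ℕ × ℕ | p.2 < lam p.1} := hc
      have h2 : ((0, c') : ℕ × ℕ) ∈ {p : ℕ × ℕ | p.2 < lam p.1} := hc'
      have := hbij.2.1 h1 h2 heq
      exact (Prod.mk.injEq _ _ _ _).mp this |>.2
    have : k ∈ C := ⟨S', hS'sub, hS'indep, by rw [hS'card, hk]⟩
    exact hub k this
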